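/- arXiv:1102.3970 — 3 statements merged into one kernel-verified Lean document; each statement's English description precedes it below -/
import Mathlib

section
/- For a loxodromic Möbius transformation f with translation length t(f) ≥ 0 and rotation angle θ(f) ∈ (−π, π], where β(f) = 4 sinh²((t(f) + iθ(f))/2), one has cosh(t(f)) = (|β(f)+4| + |β(f)|)/4. -/
open Complex

/- The parallelogram law for `exp z` and `exp (-z)`, whose norms are `e^{± re z}`. -/
theorem Complex.norm_sinh_sq_add_norm_cosh_sq (z : ℂ) :
    ‖sinh z‖ ^ 2 + ‖cosh z‖ ^ 2 = Real.cosh (2 * z.re) := by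
  have parallelogram := parallelogram_law_with_norm ℝ (exp z) (exp (-z))
  rw [norm_exp, norm_exp, neg_re] at parallelogram
  have exp_two_mul (x : ℝ) : Real.exp (2 * x) = Real.exp x ^ 2 := by
    rw [sq, ← Real.exp_add, two_mul]
  rw [sinh, cosh, norm_div, norm_div, Real.cosh_eq, ← mul_neg, exp_two_mul, exp_two_mul]
  norm_num
  linarith [parallelogram]

theorem stmt1_general (t θ : ℝ)
    (β : ℂ) (hβ : β = 4 * (Complex.sinh ((t + θ * Complex.I) / 2)) ^ 2) :
    Real.cosh t = (‖β + 4‖ + ‖β‖) / 4 := by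
  set z : ℂ := (t + θ * I) / 2
  have hβ4 : β + 4 = 4 * cosh z ^ 2 := by
    rw [hβ]; linear_combination -4 * cosh_sq_sub_sinh_sq z
  have hre : 2 * z.re = t := by simp [z]; ring
  rw [hβ4, hβ, norm_mul, norm_mul, norm_pow, norm_pow, ← hre,
    ← norm_sinh_sq_add_norm_cosh_sq]
  norm_num
  ring

theorem stmt1 (t θ : ℝ) (ht : 0 ≤ t) (hθ1 : -Real.pi < θ) (hθ2 : θ ≤ Real.pi)
    (β : ℂ) (hβ : β = 4 * (Complex.sinh ((t + θ * Complex.I) / 2)) ^ 2) :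
    Real.cosh t = (‖β + 4‖ + ‖β‖) / 4 :=
  stmt1_general t θ β hβ
end

section
/- For a loxodromic Möbius transformation f with β(f) = 4 sinh²((t(f) + iθ(f))/2), t(f) ≥ 0, θ(f) ∈ (−π, π], one has cos(θ(f)) = (|β(f)+4| − |β(f)|)/4. -/
open Complex ComplexConjugate

/- Since `cosh² - sinh² = 1`, `β + 4 = 4 cosh² w` with `w = (t + iθ)/2`, so the right-hand side is
`|cosh w|² - |sinh w|² = cosh w · cosh w̄ - sinh w · sinh w̄ = cosh (w - w̄) = cosh (iθ) = cos θ`. -/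

namespace Complex

theorem sq_norm_cosh_sub_sq_norm_sinh (z : ℂ) :
    ‖cosh z‖ ^ 2 - ‖sinh z‖ ^ 2 = Real.cos (2 * z.im) := by
  have hsub : z - conj z = 2 * z.im * I := by
    rw [sub_conj]; push_cast; ring
  have key : (‖cosh z‖ ^ 2 - ‖sinh z‖ ^ 2 : ℝ) = cos ↑(2 * z.im) := by
    push_cast
    rw [← mul_conj', ← mul_conj', ← cosh_conj, ← sinh_conj, ← cosh_sub, hsub, cosh_mul_I]
  exact_mod_cast key

theorem norm_four_mul_sinh_sq_add_four_sub_norm (z : ℂ) :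
    ‖4 * sinh z ^ 2 + 4‖ - ‖4 * sinh z ^ 2‖ = 4 * Real.cos (2 * z.im) := by
  have hcosh : 4 * sinh z ^ 2 + 4 = 4 * cosh z ^ 2 := by
    linear_combination (-4 : ℂ) * cosh_sq_sub_sinh_sq z
  rw [hcosh, norm_mul, norm_mul, norm_pow, norm_pow, ← sq_norm_cosh_sub_sq_norm_sinh]
  norm_num
  ring

end Complex

theorem stmt2_general (t θ : ℝ)
    (β : ℂ) (hβ : β = 4 * (Complex.sinh ((t + θ * Complex.I) / 2)) ^ 2) :
    Real.cos θ = (‖β + 4‖ - ‖β‖) / 4 := by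
  have him : (((t : ℂ) + θ * I) / 2).im = θ / 2 := by simp
  rw [hβ, norm_four_mul_sinh_sq_add_four_sub_norm, him]
  ring_nf

theorem stmt2 (t θ : ℝ) (ht : 0 ≤ t) (hθ1 : -Real.pi < θ) (hθ2 : θ ≤ Real.pi)
    (β : ℂ) (hβ : β = 4 * (Complex.sinh ((t + θ * Complex.I) / 2)) ^ 2) :
    Real.cos θ = (‖β + 4‖ - ‖β‖) / 4 :=
  stmt2_general t θ β hβ
end

section
/- Let u, β₁, β₂, s, γ be positive reals with β₁ ≤ β₂, u = β₁β₂ s^{4/3}, β₁β₂ s² = 4γ, γ ≥ d where d = 2(1 − cos(π/7)) and c = 2(cos(2π/7) + cos(π/7) − 1). If β₁ ≥ c, then c⁻²u³ + 4u^{3/2} ≥ 16dc, and consequently u > 0.79. -/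
open Real

lemma cos14_bounds : (0.974690 : ℝ) ≤ Real.cos (Real.pi / 14)
    ∧ Real.cos (Real.pi / 14) ≤ 0.974955 := by
  have hπl := Real.pi_gt_d6
  have hπu := Real.pi_lt_d6
  have hπpos : (0:ℝ) < Real.pi := by linarith
  have hp2l : (9.8696 : ℝ) ≤ Real.pi ^ 2 := by nlinarith
  have hp2u : Real.pi ^ 2 ≤ 9.86961 := by nlinarith
  have hp4l : (97.4089 : ℝ) ≤ Real.pi ^ 4 := by nlinarith
  have hp4u : Real.pi ^ 4 ≤ 97.4092 := by nlinarith
  have hx : |Real.pi / 14| ≤ 1 := by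
    rw [abs_of_pos (by positivity)]; nlinarith
  have hb := Real.cos_bound hx
  rw [abs_of_pos (by positivity : (0:ℝ) < Real.pi / 14), abs_le] at hb
  constructor
  · linarith only [hb.1, hp2u, hp4u]
  · linarith only [hb.2, hp2u, hp2l, hp4u, hp4l]

lemma cos7_bounds : (0.90004 : ℝ) ≤ Real.cos (Real.pi / 7)
    ∧ Real.cos (Real.pi / 7) ≤ 0.90108 := by
  obtain ⟨h1, h2⟩ := cos14_bounds
  have heq : Real.cos (Real.pi / 7) = 2 * Real.cos (Real.pi / 14) ^ 2 - 1 := by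
    rw [show Real.pi / 7 = 2 * (Real.pi / 14) by ring, Real.cos_two_mul]
  rw [heq]
  constructor
  · nlinarith [sq_nonneg (Real.cos (Real.pi / 14) - 0.974690)]
  · nlinarith [mul_nonneg (sub_nonneg.2 h2) (sub_nonneg.2 h1)]

lemma cos27_bounds : (0.62014 : ℝ) ≤ Real.cos (2 * Real.pi / 7)
    ∧ Real.cos (2 * Real.pi / 7) ≤ 0.62390 := by
  obtain ⟨h1, h2⟩ := cos7_bounds
  have heq : Real.cos (2 * Real.pi / 7) = 2 * Real.cos (Real.pi / 7) ^ 2 - 1 := by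
    rw [show 2 * Real.pi / 7 = 2 * (Real.pi / 7) by ring, Real.cos_two_mul]
  rw [heq]
  constructor
  · nlinarith [sq_nonneg (Real.cos (Real.pi / 7) - 0.90004)]
  · nlinarith [mul_nonneg (sub_nonneg.2 h2) (sub_nonneg.2 h1)]

lemma rpow_079_bound : (0.79 : ℝ) ^ ((3:ℝ)/2) ≤ 0.70217 := by
  have h3 : (0:ℝ) ≤ (0.79:ℝ) ^ ((3:ℝ)/2) := (Real.rpow_pos_of_pos (by norm_num) _).le
  have h2 : ((0.79:ℝ) ^ ((3:ℝ)/2)) ^ 2 = 0.79 ^ 3 := by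
    rw [← Real.rpow_natCast ((0.79:ℝ) ^ ((3:ℝ)/2)) 2, ← Real.rpow_mul (by norm_num)]
    norm_num
  have hsq : ((0.79:ℝ) ^ ((3:ℝ)/2)) ^ 2 ≤ (0.70217:ℝ) ^ 2 := by rw [h2]; norm_num
  calc (0.79:ℝ) ^ ((3:ℝ)/2) = Real.sqrt (((0.79:ℝ) ^ ((3:ℝ)/2)) ^ 2) :=
        (Real.sqrt_sq h3).symm
    _ ≤ Real.sqrt ((0.70217:ℝ) ^ 2) := Real.sqrt_le_sqrt hsq
    _ = 0.70217 := Real.sqrt_sq (by norm_num)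

theorem stmt6 (u β₁ β₂ s γ : ℝ)
    (hβ₁ : 0 < β₁) (hβ₂ : 0 < β₂) (hs : 0 < s) (hγpos : 0 < γ) (hu : 0 < u)
    (hle : β₁ ≤ β₂)
    (hud : u = β₁ * β₂ * s ^ ((4 : ℝ) / 3))
    (hrel : β₁ * β₂ * s ^ 2 = 4 * γ)
    (hγ : γ ≥ 2 * (1 - Real.cos (Real.pi / 7)))
    (hc : β₁ ≥ 2 * (Real.cos (2 * Real.pi / 7) + Real.cos (Real.pi / 7) - 1)) :
    (2 * (Real.cos (2 * Real.pi / 7) + Real.cos (Real.pi / 7) - 1))⁻¹ ^ 2 * u ^ 3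
        + 4 * u ^ ((3 : ℝ) / 2)
      ≥ 16 * (2 * (1 - Real.cos (Real.pi / 7)))
          * (2 * (Real.cos (2 * Real.pi / 7) + Real.cos (Real.pi / 7) - 1))
    ∧ u > 0.79 := by
  obtain ⟨h7l, h7u⟩ := cos7_bounds
  obtain ⟨h27l, h27u⟩ := cos27_bounds
  set c := 2 * (Real.cos (2 * Real.pi / 7) + Real.cos (Real.pi / 7) - 1) with hcdef
  set d := 2 * (1 - Real.cos (Real.pi / 7)) with hddef
  have hcl : (1.04036 : ℝ) ≤ c := by rw [hcdef]; linarith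
  have hdl : (0.19784 : ℝ) ≤ d := by rw [hddef]; linarith
  have hcpos : (0 : ℝ) < c := by linarith
  set B := β₁ * β₂ with hBdef
  have hBpos : 0 < B := mul_pos hβ₁ hβ₂
  have hB1 : β₁ ^ 2 ≤ B := by nlinarith
  have hsqB : c ≤ Real.sqrt B := by
    have h : β₁ ≤ Real.sqrt B := by
      rw [show β₁ = Real.sqrt (β₁ ^ 2) by rw [Real.sqrt_sq hβ₁.le]]
      exact Real.sqrt_le_sqrt hB1
    linarith
  have hspow : (0:ℝ) < s ^ ((4:ℝ)/3) := Real.rpow_pos_of_pos hs _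
  have hu32 : u ^ ((3:ℝ)/2) = B * Real.sqrt B * s ^ 2 := by
    rw [hud, Real.mul_rpow hBpos.le hspow.le, ← Real.rpow_natCast s 2,
      ← Real.rpow_mul hs.le]
    norm_num
    left
    rw [show (3:ℝ)/2 = 1 + 1/2 by norm_num, Real.rpow_add hBpos, Real.rpow_one,
      ← Real.sqrt_eq_rpow]
  have key : 4 * u ^ ((3:ℝ)/2) ≥ 16 * γ * c := by
    rw [hu32]
    have h1 : c * (B * s ^ 2) ≤ Real.sqrt B * (B * s ^ 2) :=
      mul_le_mul_of_nonneg_right hsqB (by positivity)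
    have h0 : c * (B * s ^ 2) = 4 * γ * c := by rw [hrel]; ring
    linarith only [h1, h0]
  have part1 : c⁻¹ ^ 2 * u ^ 3 + 4 * u ^ ((3:ℝ)/2) ≥ 16 * d * c := by
    have hnn : 0 ≤ c⁻¹ ^ 2 * u ^ 3 := by positivity
    have h2 : d * c ≤ γ * c := mul_le_mul_of_nonneg_right hγ hcpos.le
    linarith only [hnn, h2, key]
  refine ⟨part1, ?_⟩
  by_contra h
  push_neg at h
  have hule : u ≤ 0.79 := by norm_num at h ⊢; linarith
  have hu3le : u ^ 3 ≤ 0.493039 := by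
    have h1 := pow_le_pow_left₀ hu.le hule 3
    norm_num at h1
    linarith only [h1]
  have hr : u ^ ((3:ℝ)/2) ≤ 0.70217 := by
    have h1 : u ^ ((3:ℝ)/2) ≤ (0.79:ℝ) ^ ((3:ℝ)/2) :=
      Real.rpow_le_rpow hu.le hule (by norm_num)
    linarith only [h1, rpow_079_bound]
  have hcinv : c⁻¹ ≤ 0.96128 := by
    rw [inv_le_comm₀ (by linarith) (by norm_num)]
    have h1 : (0.96128:ℝ)⁻¹ ≤ 1.04036 := by norm_num
    linarith only [h1, hcl]
  have hcinvpos : 0 < c⁻¹ := by positivity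
  have hu3pos : 0 < u ^ 3 := by positivity
  have hbound : c⁻¹ ^ 2 * u ^ 3 ≤ 0.96128 ^ 2 * 0.493039 := by
    have h1 := mul_le_mul (pow_le_pow_left₀ hcinvpos.le hcinv 2) hu3le hu3pos.le
      (by positivity)
    linarith only [h1]
  have hdc : (0.19784 * 1.04036 : ℝ) ≤ d * c :=
    mul_le_mul hdl hcl (by norm_num) (by linarith)
  linarith only [part1, hbound, hr, hdc]
end
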